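/- arXiv:1205.1595 — 3 statements merged into one kernel-verified Lean document; each statement's English description precedes it below -/
import Mathlib

section
/- For every β > 0, the log-Laplace transform of f − E[f] satisfies the identity ln E[exp(β(f − E[f]))] = β ∫₀^β S_f(γ)/γ² dγ, where the integrand S_f(γ)/γ² is extended continuously to γ = 0. -/
open MeasureTheory Real

/-- Thermal expectation `E_{βf}[g] = E[g e^{βf}] / E[e^{βf}]`. -/
noncomputable def thermalExp {Ω : Type*} [MeasurableSpace Ω] (μ : Measure Ω)
    (β : ℝ) (f g : Ω → ℝ) : ℝ :=
  (∫ x, g x * Real.exp (β * f x) ∂μ) / ∫ x, Real.exp (β * f x) ∂μ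

/-- Canonical entropy `S_f(β) = β E_{βf}[f] − ln Z_{βf}`. -/
noncomputable def canEntropy {Ω : Type*} [MeasurableSpace Ω] (μ : Measure Ω)
    (f : Ω → ℝ) (β : ℝ) : ℝ :=
  β * thermalExp μ β f f - Real.log (∫ x, Real.exp (β * f x) ∂μ)

/-!
Write `Λ = cgf f μ` for the cumulant generating function, so `Λ 0 = 0`, `Λ' 0 = E[f]`, and
`S_f(γ) = γ Λ'(γ) - Λ(γ)`. Then `S_f(γ) / γ²` is the derivative of `Λ(γ) / γ`, which extends
continuously to `γ = 0` by `Λ'(0) = E[f]` (this extension is `dslope Λ 0`), so the fundamental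
theorem of calculus gives `∫₀^β S_f(γ)/γ² dγ = Λ(β)/β - E[f]`; multiplying by `β` yields
`Λ(β) - β E[f]`, the log-Laplace transform of `f - E[f]`. No estimate is needed near `γ = 0`:
`Λ` is convex (its second derivative is a variance under the tilted measure), hence `S_f ≥ 0`,
and a nonnegative derivative is automatically integrable.
-/

namespace ProbabilityTheory

open Set

variable {Ω : Type*} {m : MeasurableSpace Ω} {X : Ω → ℝ} {μ : Measure Ω} {t γ β : ℝ}

lemma integrableExpSet_eq_univ_of_abs_le [IsFiniteMeasure μ] (hX : AEMeasurable X μ) {C : ℝ}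
    (hC : ∀ᵐ ω ∂μ, |X ω| ≤ C) : integrableExpSet X μ = univ := by
  refine eq_univ_of_forall fun t ↦ Integrable.of_bound
    (measurable_exp.comp_aemeasurable (hX.const_mul t)).aestronglyMeasurable (exp (|t| * C)) ?_
  filter_upwards [hC] with ω hω
  rw [norm_of_nonneg (exp_pos _).le, exp_le_exp]
  calc t * X ω ≤ |t| * |X ω| := abs_mul t (X ω) ▸ le_abs_self _
    _ ≤ |t| * C := by gcongr

lemma cgf_sub_const [IsProbabilityMeasure μ] (ht : Integrable (fun ω ↦ exp (t * X ω)) μ)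
    (c : ℝ) : cgf (fun ω ↦ X ω - c) μ t = cgf X μ t - t * c := by
  simp_rw [cgf, sub_eq_add_neg, mgf_add_const,
    log_mul (mgf_pos ht).ne' (exp_pos _).ne', log_exp, mul_neg]

lemma convexOn_cgf : ConvexOn ℝ (interior (integrableExpSet X μ)) (cgf X μ) := by
  refine convexOn_of_deriv2_nonneg' convex_integrableExpSet.interior
    analyticOn_cgf.differentiableOn analyticOnNhd_cgf.deriv.differentiableOn fun v hv ↦ ?_
  rw [← iteratedDeriv_eq_iterate, ← variance_tilted_mul hv]
  exact variance_nonneg _ _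

lemma canEntropy_eq_mul_deriv_cgf_sub_cgf (hγ : γ ∈ interior (integrableExpSet X μ)) :
    canEntropy μ X γ = γ * deriv (cgf X μ) γ - cgf X μ γ := by
  rw [canEntropy, thermalExp, deriv_cgf hγ]
  rfl

lemma canEntropy_nonneg [IsZeroOrProbabilityMeasure μ] (h₀ : 0 ∈ interior (integrableExpSet X μ))
    (hγ : γ ∈ interior (integrableExpSet X μ)) (hγ₀ : 0 < γ) : 0 ≤ canEntropy μ X γ := by
  have hslope := convexOn_cgf.slope_le_deriv h₀ hγ hγ₀ (analyticAt_cgf hγ).differentiableAt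
  rw [slope_def_field, cgf_zero, sub_zero, sub_zero, div_le_iff₀ hγ₀] at hslope
  rw [canEntropy_eq_mul_deriv_cgf_sub_cgf hγ]
  linarith

lemma hasDerivAt_dslope_cgf [IsZeroOrProbabilityMeasure μ]
    (hγ : γ ∈ interior (integrableExpSet X μ)) (hγ₀ : γ ≠ 0) :
    HasDerivAt (dslope (cgf X μ) 0) (canEntropy μ X γ / γ ^ 2) γ := by
  have hslope : (fun t ↦ cgf X μ t / t) =ᶠ[nhds γ] dslope (cgf X μ) 0 := by
    filter_upwards [isOpen_ne.mem_nhds hγ₀] with t ht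
    rw [dslope_of_ne _ ht, slope_def_field, cgf_zero, sub_zero, sub_zero]
  refine (((analyticAt_cgf hγ).differentiableAt.hasDerivAt.div (hasDerivAt_id γ) hγ₀).congr_deriv
    ?_).congr_of_eventuallyEq hslope.symm
  rw [canEntropy_eq_mul_deriv_cgf_sub_cgf hγ, id]
  ring

theorem integral_canEntropy_div_sq [IsProbabilityMeasure μ] (hβ : 0 < β)
    (h : Icc 0 β ⊆ interior (integrableExpSet X μ)) :
    ∫ γ in 0..β, canEntropy μ X γ / γ ^ 2 = cgf X μ β / β - μ[X] := by
  have h₀ : 0 ∈ interior (integrableExpSet X μ) := h ⟨le_rfl, hβ.le⟩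
  have hcont : ContinuousOn (dslope (cgf X μ) 0) (Icc 0 β) :=
    ((continuousOn_dslope (isOpen_interior.mem_nhds h₀)).2
      ⟨analyticOn_cgf.continuousOn, (analyticAt_cgf h₀).differentiableAt⟩).mono h
  have hderiv : ∀ γ ∈ Ioo 0 β, HasDerivAt (dslope (cgf X μ) 0) (canEntropy μ X γ / γ ^ 2) γ :=
    fun γ hγ ↦ hasDerivAt_dslope_cgf (h (Ioo_subset_Icc_self hγ)) hγ.1.ne'
  have hnonneg : ∀ γ ∈ Ioo 0 β, 0 ≤ canEntropy μ X γ / γ ^ 2 := fun γ hγ ↦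
    div_nonneg (canEntropy_nonneg h₀ (h (Ioo_subset_Icc_self hγ)) hγ.1) (sq_nonneg γ)
  rw [intervalIntegral.integral_eq_sub_of_hasDerivAt_of_le hβ.le hcont hderiv
    ((intervalIntegrable_iff_integrableOn_Ioc_of_le hβ.le).2
      (intervalIntegral.integrableOn_deriv_of_nonneg hcont hderiv hnonneg)),
    dslope_same, deriv_cgf_zero h₀, probReal_univ, div_one, dslope_of_ne _ hβ.ne',
    slope_def_field, cgf_zero, sub_zero, sub_zero]

end ProbabilityTheory

open ProbabilityTheory

theorem stmt_0 {Ω : Type*} [MeasurableSpace Ω] (μ : Measure Ω) [IsProbabilityMeasure μ]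
    (f : Ω → ℝ) (hf : Measurable f) (C : ℝ) (hC : ∀ x, |f x| ≤ C)
    (β : ℝ) (hβ : 0 < β) :
    Real.log (∫ x, Real.exp (β * (f x - ∫ y, f y ∂μ)) ∂μ)
      = β * ∫ γ in (0:ℝ)..β, canEntropy μ f γ / γ ^ 2 := by
  have hexp : integrableExpSet f μ = Set.univ :=
    integrableExpSet_eq_univ_of_abs_le hf.aemeasurable (ae_of_all _ hC)
  rw [integral_canEntropy_div_sq hβ (by simp [hexp]), mul_sub, mul_div_cancel₀ _ hβ.ne']
  exact cgf_sub_const (show β ∈ integrableExpSet f μ by simp [hexp]) _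
end

section
/- For every β > 0 the canonical entropy has the fluctuation representation S_f(β) = ∫₀^β ∫_t^β σ²_{sf}[f] ds dt. -/
open MeasureTheory Real

/-- Thermal variance `σ²_{βf}[g] = E_{βf}[g²] − (E_{βf}[g])²`. -/
noncomputable def thermalVar {Ω : Type*} [MeasurableSpace Ω] (μ : Measure Ω)
    (β : ℝ) (f g : Ω → ℝ) : ℝ :=
  thermalExp μ β f (fun x => g x ^ 2) - (thermalExp μ β f g) ^ 2

/-!
Write `Z(t) = E[e^{tf}]`. Differentiating under the integral sign (legitimate since `f` is
bounded), `(log Z)' = E_{tf}[f]` and `(E_{tf}[f])' = σ²_{tf}[f]`. Hence the inner integral is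
`E_{βf}[f] - E_{tf}[f]`, and integrating once more over `[0, β]` gives
`β E_{βf}[f] - (log Z(β) - log Z(0))`, which is `S_f(β)` because `Z(0) = 1`.
-/

lemma exp_mul_le_exp_abs_mul {t y C : ℝ} (hy : |y| ≤ C) : exp (t * y) ≤ exp (|t| * C) :=
  exp_le_exp.2 <| (le_abs_self _).trans <|
    (abs_mul t y).trans_le <| mul_le_mul_of_nonneg_left hy (abs_nonneg t)

lemma intervalIntegral_integral_of_hasDerivAt {L G V : ℝ → ℝ}
    (hL : ∀ t, HasDerivAt L (G t) t) (hG : ∀ t, HasDerivAt G (V t) t) (hV : Continuous V)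
    (a b : ℝ) :
    ∫ t in a..b, ∫ s in t..b, V s = (b - a) * G b - (L b - L a) := by
  have hGc : Continuous G := continuous_iff_continuousAt.2 fun t => (hG t).continuousAt
  have inner : ∀ t, ∫ s in t..b, V s = G b - G t := fun t =>
    intervalIntegral.integral_eq_sub_of_hasDerivAt (fun s _ => hG s) (hV.intervalIntegrable t b)
  have outer : ∫ t in a..b, G t = L b - L a :=
    intervalIntegral.integral_eq_sub_of_hasDerivAt (fun s _ => hL s) (hGc.intervalIntegrable a b)
  simp_rw [inner]
  rw [intervalIntegral.integral_sub intervalIntegrable_const (hGc.intervalIntegrable a b),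
    intervalIntegral.integral_const, outer, smul_eq_mul]

section Thermal

variable {Ω : Type*} [MeasurableSpace Ω] {μ : Measure Ω} [IsFiniteMeasure μ]
  {f g : Ω → ℝ} {C D : ℝ}

lemma integrable_mul_exp_mul (hf : Measurable f) (hg : Measurable g) (hC : ∀ x, |f x| ≤ C)
    (hD : ∀ x, |g x| ≤ D) (t : ℝ) : Integrable (fun x => g x * exp (t * f x)) μ := by
  refine .of_bound (hg.mul (measurable_const.mul hf).exp).aestronglyMeasurable
    (D * exp (|t| * C)) (ae_of_all _ fun x => ?_)
  rw [norm_mul, norm_eq_abs, norm_eq_abs, abs_exp]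
  exact mul_le_mul (hD x) (exp_mul_le_exp_abs_mul (hC x)) (exp_pos _).le
    ((abs_nonneg _).trans (hD x))

lemma hasDerivAt_integral_mul_exp_mul (hf : Measurable f) (hg : Measurable g)
    (hC : ∀ x, |f x| ≤ C) (hD : ∀ x, |g x| ≤ D) (t₀ : ℝ) :
    HasDerivAt (fun t => ∫ x, g x * exp (t * f x) ∂μ)
      (∫ x, g x * f x * exp (t₀ * f x) ∂μ) t₀ := by
  have bound : ∀ x, ∀ t ∈ Metric.ball t₀ 1,
      ‖g x * f x * exp (t * f x)‖ ≤ D * C * exp ((|t₀| + 1) * C) := by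
    intro x t ht
    have ht' : |t| ≤ |t₀| + 1 := by
      have := abs_sub_abs_le_abs_sub t t₀
      rw [Metric.mem_ball, dist_eq] at ht
      linarith
    have hC₀ : 0 ≤ C := (abs_nonneg _).trans (hC x)
    rw [norm_mul, norm_mul, norm_eq_abs, norm_eq_abs, norm_eq_abs, abs_exp]
    exact mul_le_mul (mul_le_mul (hD x) (hC x) (abs_nonneg _) ((abs_nonneg _).trans (hD x)))
      ((exp_mul_le_exp_abs_mul (hC x)).trans (exp_le_exp.2 (by gcongr)))
      (exp_pos _).le (mul_nonneg ((abs_nonneg _).trans (hD x)) hC₀)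
  have deriv : ∀ x, ∀ t ∈ Metric.ball t₀ 1,
      HasDerivAt (fun t => g x * exp (t * f x)) (g x * f x * exp (t * f x)) t := by
    intro x t _
    simpa [mul_comm, mul_left_comm, mul_assoc] using
      ((hasDerivAt_mul_const (f x)).exp).const_mul (g x)
  exact (hasDerivAt_integral_of_dominated_loc_of_deriv_le (Metric.ball_mem_nhds t₀ one_pos)
    (.of_forall fun t => (integrable_mul_exp_mul hf hg hC hD t).aestronglyMeasurable)
    (integrable_mul_exp_mul hf hg hC hD t₀)
    ((hg.mul hf).mul (measurable_const.mul hf).exp).aestronglyMeasurable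
    (ae_of_all _ bound) (integrable_const _) (ae_of_all _ deriv)).2

lemma hasDerivAt_integral_exp_mul (hf : Measurable f) (hC : ∀ x, |f x| ≤ C) (t : ℝ) :
    HasDerivAt (fun t => ∫ x, exp (t * f x) ∂μ) (∫ x, f x * exp (t * f x) ∂μ) t := by
  simpa using hasDerivAt_integral_mul_exp_mul (μ := μ) hf measurable_one hC
    (fun _ => (abs_one).le) t

variable [NeZero μ]

lemma integral_exp_mul_pos (hf : Measurable f) (hC : ∀ x, |f x| ≤ C) (t : ℝ) :
    0 < ∫ x, exp (t * f x) ∂μ :=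
  integral_exp_pos <| by
    simpa using integrable_mul_exp_mul (μ := μ) hf measurable_one hC (fun _ => (abs_one).le) t

lemma hasDerivAt_log_integral_exp_mul (hf : Measurable f) (hC : ∀ x, |f x| ≤ C) (t : ℝ) :
    HasDerivAt (fun t => log (∫ x, exp (t * f x) ∂μ)) (thermalExp μ t f f) t :=
  (hasDerivAt_integral_exp_mul hf hC t).log (integral_exp_mul_pos hf hC t).ne'

lemma continuous_thermalExp (hf : Measurable f) (hg : Measurable g) (hC : ∀ x, |f x| ≤ C)
    (hD : ∀ x, |g x| ≤ D) : Continuous fun t => thermalExp μ t f g :=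
  continuous_iff_continuousAt.2 fun t =>
    ((hasDerivAt_integral_mul_exp_mul hf hg hC hD t).continuousAt.div
      (hasDerivAt_integral_exp_mul hf hC t).continuousAt (integral_exp_mul_pos hf hC t).ne')

lemma continuous_thermalVar (hf : Measurable f) (hC : ∀ x, |f x| ≤ C) :
    Continuous fun t => thermalVar μ t f f := by
  have hC2 : ∀ x, |f x ^ 2| ≤ C ^ 2 := fun x => by
    rw [abs_pow]
    exact pow_le_pow_left₀ (abs_nonneg _) (hC x) 2
  exact (continuous_thermalExp hf (hf.pow_const 2) hC hC2).sub
    ((continuous_thermalExp hf hf hC hC).pow 2)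

lemma hasDerivAt_thermalExp_self (hf : Measurable f) (hC : ∀ x, |f x| ≤ C) (t : ℝ) :
    HasDerivAt (fun t => thermalExp μ t f f) (thermalVar μ t f f) t := by
  have hZ := integral_exp_mul_pos (μ := μ) hf hC t
  refine ((hasDerivAt_integral_mul_exp_mul hf hf hC hC t).div
    (hasDerivAt_integral_exp_mul hf hC t) hZ.ne').congr_deriv ?_
  simp only [thermalVar, thermalExp, ← sq]
  generalize ∫ x, exp (t * f x) ∂μ = Z at hZ ⊢
  generalize ∫ x, f x ^ 2 * exp (t * f x) ∂μ = M
  generalize ∫ x, f x * exp (t * f x) ∂μ = N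
  field_simp

end Thermal

theorem stmt_3_general {Ω : Type*} [MeasurableSpace Ω] (μ : Measure Ω) [IsProbabilityMeasure μ]
    (f : Ω → ℝ) (hf : Measurable f) (C : ℝ) (hC : ∀ x, |f x| ≤ C)
    (β : ℝ) :
    canEntropy μ f β = ∫ t in (0:ℝ)..β, ∫ s in t..β, thermalVar μ s f f := by
  rw [intervalIntegral_integral_of_hasDerivAt (hasDerivAt_log_integral_exp_mul hf hC)
    (hasDerivAt_thermalExp_self hf hC) (continuous_thermalVar hf hC)]
  simp [canEntropy]

theorem stmt_3 {Ω : Type*} [MeasurableSpace Ω] (μ : Measure Ω) [IsProbabilityMeasure μ]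
    (f : Ω → ℝ) (hf : Measurable f) (C : ℝ) (hC : ∀ x, |f x| ≤ C)
    (β : ℝ) (hβ : 0 < β) :
    canEntropy μ f β = ∫ t in (0:ℝ)..β, ∫ s in t..β, thermalVar μ s f f :=
  stmt_3_general μ f hf C hC β
end

section
/- If f − E[f] ≤ 1 pointwise, then for every β > 0 the thermal variance satisfies σ²_{βf}[f] ≤ e^β · σ²[f]. -/
open MeasureTheory Real

/-!
Under the tilted probability measure `ν ∝ e^{βf} μ` the thermal variance is the variance of `f`,
hence at most `∫ (f - E f)² dν`. By Jensen, `E[e^{βf}] ≥ e^{β E f}`, so the density of `ν`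
is at most `e^{β (f - E f)} ≤ e^β`.
-/

open ProbabilityTheory

section

variable {Ω : Type*} [MeasurableSpace Ω] {μ : Measure Ω}

lemma variance_le_integral_sub_sq [IsProbabilityMeasure μ] {X : Ω → ℝ}
    (hX : AEStronglyMeasurable X μ) (c : ℝ) :
    Var[X; μ] ≤ ∫ x, (X x - c) ^ 2 ∂μ := by
  rw [← variance_sub_const hX c]
  exact variance_le_expectation_sq (hX.sub aestronglyMeasurable_const)

lemma exp_integral_le_integral_exp [IsProbabilityMeasure μ] {φ : Ω → ℝ}
    (hφ : Integrable φ μ) (hexp : Integrable (fun x => exp (φ x)) μ) :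
    exp (∫ x, φ x ∂μ) ≤ ∫ x, exp (φ x) ∂μ :=
  convexOn_exp.map_integral_le continuous_exp.continuousOn isClosed_univ
    (.of_forall fun _ => Set.mem_univ _) hφ hexp

lemma exp_div_integral_exp_le_of_sub_integral_le [IsProbabilityMeasure μ] {φ : Ω → ℝ}
    (hφ : Integrable φ μ) (hexp : Integrable (fun x => exp (φ x)) μ) {a : ℝ}
    (ha : ∀ x, φ x - ∫ y, φ y ∂μ ≤ a) (x : Ω) :
    exp (φ x) / ∫ y, exp (φ y) ∂μ ≤ exp a := by
  have hZ := exp_integral_le_integral_exp hφ hexp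
  rw [div_le_iff₀ ((exp_pos _).trans_le hZ)]
  calc exp (φ x) ≤ exp (a + ∫ y, φ y ∂μ) := exp_le_exp.2 (by linarith [ha x])
    _ ≤ exp a * ∫ y, exp (φ y) ∂μ := by rw [exp_add]; gcongr

lemma integral_tilted_le_exp_mul [IsProbabilityMeasure μ] {φ g : Ω → ℝ}
    (hφ : Integrable φ μ) (hexp : Integrable (fun x => exp (φ x)) μ) {a : ℝ}
    (ha : ∀ x, φ x - ∫ y, φ y ∂μ ≤ a) (hg : 0 ≤ g) (hgi : Integrable g μ) :
    ∫ x, g x ∂μ.tilted φ ≤ exp a * ∫ x, g x ∂μ := by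
  simp only [integral_tilted, smul_eq_mul, ← integral_const_mul]
  refine integral_mono_of_nonneg (.of_forall fun x => ?_) (hgi.const_mul _)
    (.of_forall fun x => ?_)
  · exact mul_nonneg (div_nonneg (exp_pos _).le (integral_nonneg fun _ => (exp_pos _).le)) (hg x)
  · exact mul_le_mul_of_nonneg_right
      (exp_div_integral_exp_le_of_sub_integral_le hφ hexp ha x) (hg x)

lemma thermalExp_eq_integral_tilted (β : ℝ) (f g : Ω → ℝ) :
    thermalExp μ β f g = ∫ x, g x ∂μ.tilted (fun x => β * f x) := by
  simp only [thermalExp, integral_tilted, smul_eq_mul, ← integral_div]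
  congr 1 with x
  ring

lemma thermalVar_eq_variance_tilted {β : ℝ} {f g : Ω → ℝ}
    [IsProbabilityMeasure (μ.tilted fun x => β * f x)]
    (hg : MemLp g 2 (μ.tilted fun x => β * f x)) :
    thermalVar μ β f g = Var[g; μ.tilted fun x => β * f x] := by
  simp only [thermalVar, thermalExp_eq_integral_tilted, variance_eq_sub hg, Pi.pow_apply]

end

theorem stmt_10 {Ω : Type*} [MeasurableSpace Ω] (μ : Measure Ω) [IsProbabilityMeasure μ]
    (f : Ω → ℝ) (hf : Measurable f) (C : ℝ) (hC : ∀ x, |f x| ≤ C)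
    (h1 : ∀ x, f x - ∫ y, f y ∂μ ≤ 1) (β : ℝ) (hβ : 0 < β) :
    thermalVar μ β f f ≤ Real.exp β * ∫ x, (f x - ∫ y, f y ∂μ) ^ 2 ∂μ := by
  set m := ∫ y, f y ∂μ
  have hbound (ν : Measure Ω) : ∀ᵐ x ∂ν, ‖f x‖ ≤ C := .of_forall hC
  have hf2 : MemLp f 2 μ := .of_bound hf.aestronglyMeasurable C (hbound μ)
  have hexp : Integrable (fun x => exp (β * f x)) μ :=
    integrable_exp_mul_of_le β C hβ.le hf.aemeasurable (.of_forall fun x => le_of_abs_le (hC x))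
  have hdev : ∀ x, β * f x - ∫ y, β * f y ∂μ ≤ β := fun x => by
    rw [integral_const_mul, ← mul_sub]
    exact mul_le_of_le_one_right hβ.le (h1 x)
  have := isProbabilityMeasure_tilted hexp
  calc thermalVar μ β f f = Var[f; μ.tilted fun x => β * f x] :=
        thermalVar_eq_variance_tilted (.of_bound hf.aestronglyMeasurable C (hbound _))
    _ ≤ ∫ x, (f x - m) ^ 2 ∂μ.tilted fun x => β * f x :=
        variance_le_integral_sub_sq hf.aestronglyMeasurable m
    _ ≤ exp β * ∫ x, (f x - m) ^ 2 ∂μ :=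
        integral_tilted_le_exp_mul ((hf2.integrable one_le_two).const_mul β) hexp hdev
          (fun x => sq_nonneg _) (hf2.sub (memLp_const m)).integrable_sq
end
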